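/- Let θ = 1/2, and let ε be a complex number satisfying either Re ε > 0 and ε⁻¹ ∉ ℤ, or Re ε = 0 and Im ε > 0. Define f(m,n) = −n(1+εn)/(1+ε(m+n)), g(m,r) = −(m/2+r)(1+2εr)/(1+2ε(m+r)), h(r,m) = −m(1+εm)/(1+2ε(m+r)). Suppose ψ: ℤ×(ℤ+1/2) → ℂ and ρ: (ℤ+1/2)×ℤ → ℂ satisfy, for all m,n ∈ ℤ and r ∈ ℤ+1/2: ψ(m,r) = ρ(r,m); (m−n)ψ(m+n,r) = g(n,r)ψ(m,n+r) − g(m,r)ψ(n,m+r); and (m/2−r)ρ(m+r,n) = h(r,n)ψ(m,n+r) − f(m,n)ρ(r,m+n). Then ψ(m,r) = 0 and ρ(r,m) = 0 for all m ∈ ℤ and r ∈ ℤ+1/2. -/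
import Mathlib


/-- membership in ℤ + 1/2 -/
def InZHalf (x : ℂ) : Prop := ∃ k : ℤ, x = (k : ℂ) + 1 / 2

/-- f(m,n) = −n(1+εn)/(1+ε(m+n)) -/
noncomputable def vf (ε m n : ℂ) : ℂ := -n * (1 + ε * n) / (1 + ε * (m + n))

/-- g(m,r) = −(m/2+r)(1+2εr)/(1+2ε(m+r)) -/
noncomputable def vg (ε m r : ℂ) : ℂ :=
  -(m / 2 + r) * (1 + 2 * ε * r) / (1 + 2 * ε * (m + r))

/-- h(r,m) = −m(1+εm)/(1+2ε(m+r)) -/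
noncomputable def vh (ε r m : ℂ) : ℂ := -m * (1 + ε * m) / (1 + 2 * ε * (m + r))

lemma half_ne_zero (j : ℤ) : (j : ℂ) + 1 / 2 ≠ 0 := by
  have h : ((2 * j + 1 : ℤ) : ℂ) ≠ 0 := Int.cast_ne_zero.mpr (by omega)
  intro h0
  apply h
  push_cast
  linear_combination 2 * h0

lemma one_add_eps_int_ne (ε : ℂ)
    (hε : (0 < ε.re ∧ ∀ k : ℤ, ε⁻¹ ≠ (k : ℂ)) ∨ (ε.re = 0 ∧ 0 < ε.im))
    (j : ℤ) : 1 + ε * (j : ℂ) ≠ 0 := by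
  rcases hε with ⟨hre, hk⟩ | ⟨hre, _⟩
  · intro h0
    have hεne : ε ≠ 0 := by
      intro h; rw [h] at h0; simp at h0
    have hmul : ε * (-(j : ℂ)) = 1 := by linear_combination -h0
    have : ε⁻¹ = ((-j : ℤ) : ℂ) := by
      push_cast
      exact inv_eq_of_mul_eq_one_right hmul
    exact hk (-j) this
  · intro h0
    have := congrArg Complex.re h0
    simp [Complex.add_re, Complex.mul_re, hre] at this

lemma one_add_two_eps_half_ne (ε : ℂ)
    (hε : (0 < ε.re ∧ ∀ k : ℤ, ε⁻¹ ≠ (k : ℂ)) ∨ (ε.re = 0 ∧ 0 < ε.im))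
    (j : ℤ) : 1 + 2 * ε * ((j : ℂ) + 1 / 2) ≠ 0 := by
  have h := one_add_eps_int_ne ε hε (2 * j + 1)
  intro h0
  apply h
  push_cast
  linear_combination h0

/-- Case (I) (θ = 1/2, Neveu–Schwarz) in the proof of Theorem 4.2:
if ψ and ρ satisfy the third line of (4.7) together with (4.9) and (4.10), then
ψ = ρ = 0. -/
theorem psi_rho_vanish_NS (ε : ℂ)
    (hε : (0 < ε.re ∧ ∀ k : ℤ, ε⁻¹ ≠ (k : ℂ)) ∨ (ε.re = 0 ∧ 0 < ε.im))
    (ψ ρ : ℂ → ℂ → ℂ)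
    (hpr : ∀ (m : ℤ) (r : ℂ), InZHalf r → ψ m r = ρ r m)
    (h9 : ∀ (m n : ℤ) (r : ℂ), InZHalf r →
      ((m : ℂ) - (n : ℂ)) * ψ ((m : ℂ) + (n : ℂ)) r
        = vg ε n r * ψ m ((n : ℂ) + r) - vg ε m r * ψ n ((m : ℂ) + r))
    (h10 : ∀ (m n : ℤ) (r : ℂ), InZHalf r →
      ((m : ℂ) / 2 - r) * ρ ((m : ℂ) + r) n
        = vh ε r n * ψ m ((n : ℂ) + r) - vf ε m n * ρ r ((m : ℂ) + (n : ℂ))) :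
    ∀ (m : ℤ) (r : ℂ), InZHalf r → ψ m r = 0 ∧ ρ r m = 0 := by
  -- Step 1: ψ(0, s) = 0 for every half-integer s.
  have step1 : ∀ (s : ℂ), InZHalf s → ψ 0 s = 0 := by
    intro s hs
    obtain ⟨j, rfl⟩ := hs
    set s : ℂ := (j : ℂ) + 1 / 2 with hsdef
    have h := h10 0 0 s ⟨j, rfl⟩
    have hvh : vh ε s 0 = 0 := by simp [vh]
    have hvf : vf ε 0 0 = 0 := by simp [vf]
    push_cast at h
    rw [zero_add, add_zero, hvh, hvf] at h
    have hz : s * ρ s 0 = 0 := by linear_combination -h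
    have hρ : ρ s 0 = 0 := (mul_eq_zero.mp hz).resolve_left (half_ne_zero j)
    have h0 := hpr 0 s ⟨j, rfl⟩
    push_cast at h0
    rw [h0, hρ]
  -- Step 2: general vanishing.
  intro m r hr
  obtain ⟨k, rfl⟩ := hr
  set r : ℂ := (k : ℂ) + 1 / 2 with hrdef
  have hψ : ψ m r = 0 := by
    have h := h9 m 0 r ⟨k, rfl⟩
    have hvg0 : vg ε 0 r = -r := by
      unfold vg
      rw [show (0 : ℂ) / 2 + r = r by ring, show (0 : ℂ) + r = r by ring]
      rw [neg_mul, neg_div]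
      rw [mul_div_assoc, div_self (one_add_two_eps_half_ne ε hε k)]
      ring
    have hψ0 : ψ 0 ((m : ℂ) + r) = 0 := by
      have harg : (m : ℂ) + r = ((m + k : ℤ) : ℂ) + 1 / 2 := by
        rw [hrdef]; push_cast; ring
      rw [harg]
      exact step1 _ ⟨m + k, rfl⟩
    push_cast at h
    rw [sub_zero, add_zero, zero_add, hvg0, hψ0] at h
    have key : ((m : ℂ) + r) * ψ m r = 0 := by linear_combination h
    have hne : (m : ℂ) + r ≠ 0 := by
      rw [hrdef, show (m : ℂ) + ((k : ℂ) + 1 / 2) = ((m + k : ℤ) : ℂ) + 1 / 2 by push_cast; ring]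
      exact half_ne_zero (m + k)
    exact (mul_eq_zero.mp key).resolve_left hne
  exact ⟨hψ, by rw [← hpr m r ⟨k, rfl⟩]; exact hψ⟩
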